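/- For the equally likely ensemble S₁ = {|01⟩, |10⟩, (|00⟩+|11⟩)/√2, (|00⟩−|11⟩)/√2} in ℂ²⊗ℂ², the optimal separable success probability and the separable fidelity both equal 3/4, attained by measuring in the computational basis. -/

import Mathlib

open Matrix
open scoped BigOperators ComplexOrder

noncomputable section

/-- Product vector `|a⟩⊗|b⟩`. -/
def prodv {d₁ d₂ : ℕ} (a : Fin d₁ → ℂ) (b : Fin d₂ → ℂ) : Fin d₁ × Fin d₂ → ℂ :=
  fun y => a y.1 * b y.2

/-- Separable-fidelity set; its supremum is the separable fidelity `F_S`. -/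
def sepFidSet {d₁ d₂ : ℕ} (N : ℕ) (p : Fin N → ℝ)
    (ψ : Fin N → (Fin d₁ × Fin d₂ → ℂ)) : Set ℝ :=
  {x : ℝ | ∃ (A : ℕ) (m : Fin A → ℝ) (χ₁ : Fin A → Fin d₁ → ℂ)
      (χ₂ : Fin A → Fin d₂ → ℂ) (φ : Fin A → (Fin d₁ × Fin d₂ → ℂ)),
    (∀ a, 0 < m a) ∧ (∀ a, star (φ a) ⬝ᵥ φ a = 1) ∧
    (∑ a, (m a : ℂ) • Matrix.vecMulVec (prodv (χ₁ a) (χ₂ a))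
        (star (prodv (χ₁ a) (χ₂ a))) = 1) ∧
    x = ∑ a, ∑ i, p i * m a *
          (‖(star (ψ i) ⬝ᵥ prodv (χ₁ a) (χ₂ a))‖)^2 *
          (‖(star (ψ i) ⬝ᵥ φ a)‖)^2}

/-- Separable success-probability set; its supremum is `P_s(S)`. -/
def sepPsSet {d₁ d₂ : ℕ} (N : ℕ) (p : Fin N → ℝ)
    (ψ : Fin N → (Fin d₁ × Fin d₂ → ℂ)) : Set ℝ :=
  {x : ℝ | ∃ (A : ℕ) (m : Fin A → ℝ) (χ₁ : Fin A → Fin d₁ → ℂ)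
      (χ₂ : Fin A → Fin d₂ → ℂ) (G : Fin A → Fin N),
    (∀ a, 0 < m a) ∧
    (∑ a, (m a : ℂ) • Matrix.vecMulVec (prodv (χ₁ a) (χ₂ a))
        (star (prodv (χ₁ a) (χ₂ a))) = 1) ∧
    x = ∑ a, p (G a) * m a *
          (‖(star (ψ (G a)) ⬝ᵥ prodv (χ₁ a) (χ₂ a))‖)^2}

/-- The ensemble `S₁ = {|01⟩, |10⟩, (|00⟩+|11⟩)/√2, (|00⟩−|11⟩)/√2}` in `ℂ²⊗ℂ²`. -/
def S₁ : Fin 4 → (Fin 2 × Fin 2 → ℂ) :=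
  ![fun y => if y = (0, 1) then 1 else 0,
    fun y => if y = (1, 0) then 1 else 0,
    fun y => if y = (0, 0) then ((Real.sqrt 2)⁻¹ : ℂ)
             else if y = (1, 1) then ((Real.sqrt 2)⁻¹ : ℂ) else 0,
    fun y => if y = (0, 0) then ((Real.sqrt 2)⁻¹ : ℂ)
             else if y = (1, 1) then -((Real.sqrt 2)⁻¹ : ℂ) else 0]

/-!
For a separable rank-one measurement `∑ₐ mₐ |vₐ⟩⟨vₐ| = 1`, `vₐ = χ₁ₐ ⊗ χ₂ₐ`, with guesses `G a`,
let `uᵢ = ∑_{G a = i} mₐ |⟨ψᵢ|vₐ⟩|²`. Testing completeness on `ψᵢ` gives `uᵢ ≤ 1`; taking its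
trace and using the Schmidt bound `|⟨ψᵢ|χ₁ ⊗ χ₂⟩|² ≤ λᵢ ‖χ₁‖² ‖χ₂‖²` (`λ = 1, 1, 1/2, 1/2`) gives
`∑ λᵢ⁻¹ uᵢ ≤ 4`. Hence `∑ uᵢ = ½ ∑ λᵢ⁻¹ uᵢ + ½ (u₀ + u₁) ≤ 3`, i.e. `P_s ≤ 3/4`, which the
computational basis attains.

Since `S₁` is an orthonormal basis, the fidelity of a measure-and-prepare scheme is at most the
success probability of guessing the state of largest likelihood, and preparing the guessed state
attains it; so `F_S = P_s`.
-/

section POVM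

variable {n : Type*} [Fintype n] [DecidableEq n]

lemma sum_mul_normSq_dotProduct_of_sum_vecMulVec_eq_one {A : ℕ} {m : Fin A → ℝ}
    {v : Fin A → n → ℂ} (h : ∑ a, (m a : ℂ) • vecMulVec (v a) (star (v a)) = 1)
    {w : n → ℂ} (hw : star w ⬝ᵥ w = 1) :
    ∑ a, m a * ‖star w ⬝ᵥ v a‖ ^ 2 = 1 := by
  have key := congrArg (fun M => star w ⬝ᵥ M *ᵥ w) h
  simp only [Matrix.sum_mulVec, Matrix.smul_mulVec, vecMulVec_mulVec, one_mulVec, hw,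
    dotProduct_sum, dotProduct_smul, op_smul_eq_mul, smul_eq_mul] at key
  simp only [star_dotProduct (v _) w, Complex.star_def, Complex.mul_conj,
    Complex.normSq_eq_norm_sq] at key
  exact_mod_cast key

lemma sum_mul_sum_sq_norm_of_sum_vecMulVec_eq_one {A : ℕ} {m : Fin A → ℝ}
    {v : Fin A → n → ℂ} (h : ∑ a, (m a : ℂ) • vecMulVec (v a) (star (v a)) = 1) :
    ∑ a, m a * ∑ y, ‖v a y‖ ^ 2 = Fintype.card n := by
  have key := congrArg trace h
  simp only [trace_sum, trace_smul, trace_vecMulVec, trace_one, dotProduct, Pi.star_apply,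
    Complex.star_def, Complex.mul_conj, Complex.normSq_eq_norm_sq, smul_eq_mul] at key
  exact_mod_cast key

end POVM

lemma sum_sq_norm_prodv {d₁ d₂ : ℕ} (a : Fin d₁ → ℂ) (b : Fin d₂ → ℂ) :
    ∑ y, ‖prodv a b y‖ ^ 2 = (∑ j, ‖a j‖ ^ 2) * ∑ k, ‖b k‖ ^ 2 := by
  simp only [Fintype.sum_prod_type, Finset.sum_mul_sum, prodv, norm_mul, mul_pow]

lemma exists_sum_mul_le_mul_sum {ι : Type*} [Fintype ι] [Nonempty ι] (f g : ι → ℝ)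
    (hg : ∀ i, 0 ≤ g i) : ∃ j, ∑ i, f i * g i ≤ f j * ∑ i, g i := by
  obtain ⟨j, hj⟩ := Finite.exists_max f
  refine ⟨j, ?_⟩
  rw [Finset.mul_sum]
  exact Finset.sum_le_sum fun i _ => mul_le_mul_of_nonneg_right (hj i) (hg i)

lemma sup'_univ_eq_of_forall_le {ι α : Type*} [Fintype ι] [Nonempty ι] [LinearOrder α]
    {f : ι → α} (i₀ : ι) (h : ∀ i, f i ≤ f i₀) :
    Finset.univ.sup' Finset.univ_nonempty f = f i₀ :=
  le_antisymm (Finset.sup'_le _ _ fun i _ => h i) (Finset.le_sup' f (Finset.mem_univ i₀))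

section Ensemble

variable {d₁ d₂ N : ℕ} {p : Fin N → ℝ} {ψ : Fin N → Fin d₁ × Fin d₂ → ℂ}

lemma sum_sq_norm_dotProduct_of_sum_vecMulVec_eq_one
    (hcomplete : ∑ i, vecMulVec (ψ i) (star (ψ i)) = 1) {φ : Fin d₁ × Fin d₂ → ℂ}
    (hφ : star φ ⬝ᵥ φ = 1) : ∑ i, ‖star (ψ i) ⬝ᵥ φ‖ ^ 2 = 1 := by
  have h := sum_mul_normSq_dotProduct_of_sum_vecMulVec_eq_one (m := fun _ => 1)
    (by simpa using hcomplete) hφ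
  simpa only [one_mul, star_dotProduct φ, norm_star] using h

lemma exists_mem_sepPsSet_le_of_mem_sepFidSet [NeZero N]
    (hcomplete : ∑ i, vecMulVec (ψ i) (star (ψ i)) = 1) {x : ℝ} (hx : x ∈ sepFidSet N p ψ) :
    ∃ y ∈ sepPsSet N p ψ, x ≤ y := by
  obtain ⟨A, m, χ₁, χ₂, φ, hm, hφ, hc, rfl⟩ := hx
  have hbest : ∀ a, ∃ g, ∑ i, p i * ‖star (ψ i) ⬝ᵥ prodv (χ₁ a) (χ₂ a)‖ ^ 2 *
      ‖star (ψ i) ⬝ᵥ φ a‖ ^ 2 ≤ p g * ‖star (ψ g) ⬝ᵥ prodv (χ₁ a) (χ₂ a)‖ ^ 2 := fun a => by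
    simpa [sum_sq_norm_dotProduct_of_sum_vecMulVec_eq_one hcomplete (hφ a)] using
      exists_sum_mul_le_mul_sum _ _ fun i => sq_nonneg ‖star (ψ i) ⬝ᵥ φ a‖
  choose G hG using hbest
  refine ⟨_, ⟨A, m, χ₁, χ₂, G, hm, hc, rfl⟩, Finset.sum_le_sum fun a _ => ?_⟩
  calc ∑ i, p i * m a * ‖star (ψ i) ⬝ᵥ prodv (χ₁ a) (χ₂ a)‖ ^ 2 * ‖star (ψ i) ⬝ᵥ φ a‖ ^ 2
      = m a * ∑ i, p i * ‖star (ψ i) ⬝ᵥ prodv (χ₁ a) (χ₂ a)‖ ^ 2 * ‖star (ψ i) ⬝ᵥ φ a‖ ^ 2 := by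
        rw [Finset.mul_sum]; exact Finset.sum_congr rfl fun i _ => by ring
    _ ≤ m a * (p (G a) * ‖star (ψ (G a)) ⬝ᵥ prodv (χ₁ a) (χ₂ a)‖ ^ 2) :=
        mul_le_mul_of_nonneg_left (hG a) (hm a).le
    _ = _ := by ring

lemma sepPsSet_subset_sepFidSet (hortho : ∀ i j, star (ψ i) ⬝ᵥ ψ j = if i = j then 1 else 0) :
    sepPsSet N p ψ ⊆ sepFidSet N p ψ := by
  rintro _ ⟨A, m, χ₁, χ₂, G, hm, hc, rfl⟩
  refine ⟨A, m, χ₁, χ₂, fun a => ψ (G a), hm, fun a => by simp [hortho], hc, ?_⟩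
  simp [hortho, apply_ite (fun z : ℂ => ‖z‖ ^ 2)]

lemma IsGreatest.sepFidSet_of_sepPsSet [NeZero N]
    (hortho : ∀ i j, star (ψ i) ⬝ᵥ ψ j = if i = j then 1 else 0)
    (hcomplete : ∑ i, vecMulVec (ψ i) (star (ψ i)) = 1) {c : ℝ}
    (hc : IsGreatest (sepPsSet N p ψ) c) : IsGreatest (sepFidSet N p ψ) c := by
  refine ⟨sepPsSet_subset_sepFidSet hortho hc.1, fun x hx => ?_⟩
  obtain ⟨y, hy, hxy⟩ := exists_mem_sepPsSet_le_of_mem_sepFidSet hcomplete hx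
  exact hxy.trans (hc.2 hy)

end Ensemble

lemma inv_sqrt_two_mul_self : (Real.sqrt 2 : ℂ)⁻¹ * (Real.sqrt 2 : ℂ)⁻¹ = 1 / 2 := by
  rw [← mul_inv, ← Complex.ofReal_mul, Real.mul_self_sqrt zero_le_two]
  norm_num

lemma norm_inv_sqrt_two_sq : ‖(Real.sqrt 2 : ℂ)⁻¹‖ ^ 2 = 1 / 2 := by
  rw [norm_inv, inv_pow, Complex.norm_real, Real.norm_eq_abs, sq_abs,
    Real.sq_sqrt zero_le_two, one_div]

lemma S₁_orthonormal (i j : Fin 4) : star (S₁ i) ⬝ᵥ S₁ j = if i = j then 1 else 0 := by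
  fin_cases i <;> fin_cases j <;>
    simp [S₁, dotProduct, Fintype.sum_prod_type, Prod.ext_iff, inv_sqrt_two_mul_self] <;>
    norm_num

lemma sum_vecMulVec_S₁ : ∑ i, vecMulVec (S₁ i) (star (S₁ i)) = 1 := by
  ext ⟨y₁, y₂⟩ ⟨z₁, z₂⟩
  fin_cases y₁ <;> fin_cases y₂ <;> fin_cases z₁ <;> fin_cases z₂ <;>
    simp [S₁, vecMulVec_apply, Fin.sum_univ_four, one_apply, Prod.ext_iff,
      inv_sqrt_two_mul_self] <;> norm_num

lemma S₁_dotProduct_prodv (i : Fin 4) (χ₁ χ₂ : Fin 2 → ℂ) :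
    star (S₁ i) ⬝ᵥ prodv χ₁ χ₂ =
      ![χ₁ 0 * χ₂ 1, χ₁ 1 * χ₂ 0, (Real.sqrt 2 : ℂ)⁻¹ * (χ₁ 0 * χ₂ 0 + χ₁ 1 * χ₂ 1),
        (Real.sqrt 2 : ℂ)⁻¹ * (χ₁ 0 * χ₂ 0 + χ₁ 1 * -χ₂ 1)] i := by
  fin_cases i <;> simp [S₁, dotProduct, prodv, Fintype.sum_prod_type, Prod.ext_iff] <;> ring

lemma sq_norm_mul_add_mul_le (a₀ a₁ b₀ b₁ : ℂ) :
    ‖a₀ * b₀ + a₁ * b₁‖ ^ 2 ≤ (‖a₀‖ ^ 2 + ‖a₁‖ ^ 2) * (‖b₀‖ ^ 2 + ‖b₁‖ ^ 2) := by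
  have h := norm_add_le (a₀ * b₀) (a₁ * b₁)
  rw [norm_mul, norm_mul] at h
  nlinarith [norm_nonneg (a₀ * b₀ + a₁ * b₁), sq_nonneg (‖a₀‖ * ‖b₁‖ - ‖a₁‖ * ‖b₀‖)]

-- `S₁SchmidtInv i = λᵢ⁻¹`, the inverse squared largest Schmidt coefficient of `S₁ i`.
def S₁SchmidtInv : Fin 4 → ℝ := ![1, 1, 2, 2]

lemma S₁SchmidtInv_mul_sq_norm_le (i : Fin 4) (χ₁ χ₂ : Fin 2 → ℂ) :
    S₁SchmidtInv i * ‖star (S₁ i) ⬝ᵥ prodv χ₁ χ₂‖ ^ 2 ≤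
      (∑ j, ‖χ₁ j‖ ^ 2) * ∑ k, ‖χ₂ k‖ ^ 2 := by
  have hCS := sq_norm_mul_add_mul_le (χ₁ 0) (χ₁ 1) (χ₂ 0)
  have hCS_neg := hCS (-χ₂ 1)
  rw [norm_neg] at hCS_neg
  simp only [Fin.sum_univ_two]
  fin_cases i <;>
    simp only [S₁SchmidtInv, S₁_dotProduct_prodv, Fin.zero_eta, Fin.mk_one, Fin.reduceFinMk,
      Matrix.cons_val, norm_mul, mul_pow, norm_inv_sqrt_two_sq]
  · nlinarith [mul_nonneg (sq_nonneg ‖χ₁ 1‖) (sq_nonneg ‖χ₂ 0‖)]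
  · nlinarith [mul_nonneg (sq_nonneg ‖χ₁ 0‖) (sq_nonneg ‖χ₂ 1‖)]
  · linarith [hCS (χ₂ 1)]
  · linarith

lemma sum_le_three_of_sum_S₁SchmidtInv_mul_le {u : Fin 4 → ℝ} (hu : ∀ i, u i ≤ 1)
    (hschmidt : ∑ i, S₁SchmidtInv i * u i ≤ 4) : ∑ i, u i ≤ 3 := by
  simp only [Fin.sum_univ_four, S₁SchmidtInv, Matrix.cons_val] at hschmidt ⊢
  linarith [hu 0, hu 1]

lemma sum_mul_sq_norm_S₁_dotProduct_le_three {A : ℕ} {m : Fin A → ℝ}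
    {χ₁ χ₂ : Fin A → Fin 2 → ℂ} (G : Fin A → Fin 4) (hm : ∀ a, 0 ≤ m a)
    (hc : ∑ a, (m a : ℂ) • vecMulVec (prodv (χ₁ a) (χ₂ a)) (star (prodv (χ₁ a) (χ₂ a))) = 1) :
    ∑ a, m a * ‖star (S₁ (G a)) ⬝ᵥ prodv (χ₁ a) (χ₂ a)‖ ^ 2 ≤ 3 := by
  set q : Fin 4 → Fin A → ℝ := fun i a => m a * ‖star (S₁ i) ⬝ᵥ prodv (χ₁ a) (χ₂ a)‖ ^ 2
  have hq : ∀ i a, 0 ≤ q i a := fun i a => mul_nonneg (hm a) (sq_nonneg _)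
  set u : Fin 4 → ℝ := fun i => ∑ a with G a = i, q i a
  have hfib : ∀ f : Fin 4 → ℝ, ∑ a, f (G a) * q (G a) a = ∑ i, f i * u i := fun f => by
    rw [← Finset.sum_fiberwise Finset.univ G]
    refine Finset.sum_congr rfl fun i _ => ?_
    rw [Finset.mul_sum]
    exact Finset.sum_congr rfl fun a ha => by rw [(Finset.mem_filter.mp ha).2]
  have hu : ∀ i, u i ≤ 1 := fun i =>
    calc u i ≤ ∑ a, q i a :=
          Finset.sum_le_sum_of_subset_of_nonneg (Finset.filter_subset _ _)
            fun a _ _ => hq i a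
      _ = 1 := sum_mul_normSq_dotProduct_of_sum_vecMulVec_eq_one hc (by simp [S₁_orthonormal])
  have hschmidt : ∑ i, S₁SchmidtInv i * u i ≤ 4 :=
    calc ∑ i, S₁SchmidtInv i * u i = ∑ a, S₁SchmidtInv (G a) * q (G a) a := (hfib _).symm
      _ ≤ ∑ a, m a * ∑ y, ‖prodv (χ₁ a) (χ₂ a) y‖ ^ 2 := by
          refine Finset.sum_le_sum fun a _ => ?_
          rw [sum_sq_norm_prodv, mul_left_comm]
          exact mul_le_mul_of_nonneg_left (S₁SchmidtInv_mul_sq_norm_le _ _ _) (hm a)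
      _ = 4 := by simpa using sum_mul_sum_sq_norm_of_sum_vecMulVec_eq_one hc
  have htotal : ∑ a, q (G a) a = ∑ i, u i := by simpa using hfib 1
  exact htotal ▸ sum_le_three_of_sum_S₁SchmidtInv_mul_le hu hschmidt

def compBasisFst : Fin 4 → Fin 2 → ℂ :=
  ![Pi.single 0 1, Pi.single 0 1, Pi.single 1 1, Pi.single 1 1]

def compBasisSnd : Fin 4 → Fin 2 → ℂ :=
  ![Pi.single 0 1, Pi.single 1 1, Pi.single 0 1, Pi.single 1 1]

-- Maximum-likelihood decoding: outcome `|jk⟩` is read as a state of `S₁` of largest overlap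
-- with `|jk⟩`.
def mlDecoder : Fin 4 → Fin 4 := ![2, 0, 1, 2]

lemma sum_vecMulVec_compBasis :
    ∑ a : Fin 4, ((1 : ℝ) : ℂ) • vecMulVec (prodv (compBasisFst a) (compBasisSnd a))
      (star (prodv (compBasisFst a) (compBasisSnd a))) = 1 := by
  ext ⟨y₁, y₂⟩ ⟨z₁, z₂⟩
  fin_cases y₁ <;> fin_cases y₂ <;> fin_cases z₁ <;> fin_cases z₂ <;>
    simp [compBasisFst, compBasisSnd, prodv, vecMulVec_apply, Fin.sum_univ_four, one_apply]

lemma compBasis_success :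
    ∑ a : Fin 4, (4 : ℝ)⁻¹ * 1 *
      ‖star (S₁ (mlDecoder a)) ⬝ᵥ prodv (compBasisFst a) (compBasisSnd a)‖ ^ 2 = 3 / 4 := by
  simp [Fin.sum_univ_four, mlDecoder, compBasisFst, compBasisSnd, S₁_dotProduct_prodv]
  norm_num

/-- For the equally likely ensemble `S₁`, the optimal separable success probability
and the separable fidelity both equal `3/4`, and this value is attained by measuring
in the computational basis with maximum-likelihood decoding. -/
theorem stmt19 :
    IsGreatest (sepPsSet 4 (fun _ => (4 : ℝ)⁻¹) S₁) (3 / 4) ∧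
    IsGreatest (sepFidSet 4 (fun _ => (4 : ℝ)⁻¹) S₁) (3 / 4) ∧
    ∑ a : Fin 2 × Fin 2,
        (Finset.univ.sup' Finset.univ_nonempty
          fun i : Fin 4 => (4 : ℝ)⁻¹ * ‖S₁ i a‖^2) = 3 / 4 := by
  have hPs : IsGreatest (sepPsSet 4 (fun _ => (4 : ℝ)⁻¹) S₁) (3 / 4) := by
    refine ⟨⟨4, fun _ => 1, compBasisFst, compBasisSnd, mlDecoder, fun _ => one_pos,
      sum_vecMulVec_compBasis, compBasis_success.symm⟩, ?_⟩
    rintro _ ⟨A, m, χ₁, χ₂, G, hm, hc, rfl⟩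
    have h := sum_mul_sq_norm_S₁_dotProduct_le_three G (fun a => (hm a).le) hc
    simp only [mul_assoc, ← Finset.mul_sum]
    linarith
  refine ⟨hPs, hPs.sepFidSet_of_sepPsSet S₁_orthonormal sum_vecMulVec_S₁, ?_⟩
  simp only [Fintype.sum_prod_type, Fin.sum_univ_two]
  rw [sup'_univ_eq_of_forall_le 2, sup'_univ_eq_of_forall_le 0, sup'_univ_eq_of_forall_le 1,
    sup'_univ_eq_of_forall_le 2]
  · simp [S₁]
    norm_num
  all_goals intro i; fin_cases i <;> simp [S₁]
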